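/- Let q ∈ (0,1], n a positive integer, α ≥ 2 an integer, and j, k nonnegative integers with j+2 ≤ k ≤ n and k ≥ α. If [k+1]_q - (q^k[k+1]_q)^{1/α} < [j+1]_q, then [k]_q/[n+1]_q - [j]_q/[n+1]_q ≤ (q^{k-α}[k+1]_q)^{1/α}/[n+1]_q ≤ 1/[n+1]_q^{1-1/α}. -/

import Mathlib

/-! Since `[m+1]_q = q [m]_q + 1` and `(q^k x)^{1/α} = q (q^{k-α} x)^{1/α}`, the hypothesis is `q` times
the first inequality. The second follows from `q^{k-α} [k+1]_q ≤ [n+1]_q`. -/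

noncomputable def qint (q : ℝ) (n : ℕ) : ℝ := ∑ i ∈ Finset.range n, q ^ i

section QInt

variable {q : ℝ}

lemma qint_succ (q : ℝ) (n : ℕ) : qint q (n + 1) = q * qint q n + 1 := geom_sum_succ

lemma qint_nonneg (hq : 0 ≤ q) (n : ℕ) : 0 ≤ qint q n :=
  Finset.sum_nonneg fun i _ => pow_nonneg hq i

lemma qint_succ_pos (hq : 0 ≤ q) (n : ℕ) : 0 < qint q (n + 1) := by
  rw [qint_succ]
  linarith [mul_nonneg hq (qint_nonneg hq n)]

lemma qint_mono (hq : 0 ≤ q) : Monotone (qint q) := fun _ _ hmn =>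
  Finset.sum_le_sum_of_subset_of_nonneg (Finset.range_subset_range.mpr hmn)
    fun i _ _ => pow_nonneg hq i

lemma qint_sub_lt_of_qint_succ_sub_lt (hq : 0 < q) {j k : ℕ} {a : ℝ}
    (h : qint q (k + 1) - q * a < qint q (j + 1)) : qint q k - qint q j < a := by
  rw [qint_succ, qint_succ] at h
  have : q * (qint q k - qint q j) < q * a := by linarith
  exact lt_of_mul_lt_mul_left this hq.le

end QInt

lemma pow_mul_rpow_one_div_eq {q c : ℝ} (hq : 0 ≤ q) (hc : 0 ≤ c) {α k : ℕ} (hα : α ≠ 0)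
    (hk : α ≤ k) :
    (q ^ k * c) ^ ((1 : ℝ) / α) = q * (q ^ (k - α) * c) ^ ((1 : ℝ) / α) := by
  rw [← Nat.add_sub_cancel' hk, pow_add, Nat.add_sub_cancel_left, mul_assoc,
    Real.mul_rpow (by positivity) (by positivity), one_div, Real.pow_rpow_inv_natCast hq hα]

lemma rpow_div_le_one_div_rpow_one_sub {x N p : ℝ} (hx : 0 ≤ x) (hxN : x ≤ N) (hN : 0 < N)
    (hp : 0 ≤ p) : x ^ p / N ≤ 1 / N ^ (1 - p) := by
  calc x ^ p / N ≤ N ^ p / N := by gcongr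
    _ = 1 / N ^ (1 - p) := by
      rw [Real.rpow_sub hN, Real.rpow_one, one_div_div, div_eq_div_iff hN.ne' hN.ne']

theorem stmt_13_general (q : ℝ) (hq0 : 0 < q) (hq1 : q ≤ 1) (n : ℕ)
    (α : ℕ) (hα : 2 ≤ α) (j k : ℕ) (hkn : k ≤ n) (hkα : α ≤ k)
    (h : qint q (k + 1) - (q ^ k * qint q (k + 1)) ^ ((1 : ℝ) / α) < qint q (j + 1)) :
    qint q k / qint q (n + 1) - qint q j / qint q (n + 1) ≤
      (q ^ (k - α) * qint q (k + 1)) ^ ((1 : ℝ) / α) / qint q (n + 1) ∧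
    (q ^ (k - α) * qint q (k + 1)) ^ ((1 : ℝ) / α) / qint q (n + 1) ≤
      1 / qint q (n + 1) ^ (1 - (1 : ℝ) / α) := by
  have hN := qint_succ_pos hq0.le n
  have hk := qint_nonneg hq0.le (k + 1)
  rw [pow_mul_rpow_one_div_eq hq0.le hk (by omega) hkα] at h
  have hkey := qint_sub_lt_of_qint_succ_sub_lt hq0 h
  have hbase : q ^ (k - α) * qint q (k + 1) ≤ qint q (n + 1) :=
    calc q ^ (k - α) * qint q (k + 1) ≤ 1 * qint q (k + 1) := by
          gcongr; exact pow_le_one₀ hq0.le hq1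
      _ ≤ qint q (n + 1) := by rw [one_mul]; exact qint_mono hq0.le (by omega)
  refine ⟨?_, rpow_div_le_one_div_rpow_one_sub (by positivity) hbase hN (by positivity)⟩
  rw [div_sub_div_same]
  exact div_le_div_of_nonneg_right hkey.le hN.le

theorem stmt_13 (q : ℝ) (hq0 : 0 < q) (hq1 : q ≤ 1) (n : ℕ) (hn : 1 ≤ n)
    (α : ℕ) (hα : 2 ≤ α) (j k : ℕ) (hjk : j + 2 ≤ k) (hkn : k ≤ n) (hkα : α ≤ k)
    (h : qint q (k + 1) - (q ^ k * qint q (k + 1)) ^ ((1 : ℝ) / α) < qint q (j + 1)) :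
    qint q k / qint q (n + 1) - qint q j / qint q (n + 1) ≤
      (q ^ (k - α) * qint q (k + 1)) ^ ((1 : ℝ) / α) / qint q (n + 1) ∧
    (q ^ (k - α) * qint q (k + 1)) ^ ((1 : ℝ) / α) / qint q (n + 1) ≤
      1 / qint q (n + 1) ^ (1 - (1 : ℝ) / α) :=
  stmt_13_general q hq0 hq1 n α hα j k hkn hkα h
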